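/- Let N be an even positive integer with N ≥ 4 and let ν be the least positive root of U'_{N+1}(x). For k = 1,…,N let z_k(ν) = (−1)^{k−1}( U_{k−1}(ν)U_k(ν) − U_{N−k}(ν)U_{N−k+1}(ν) + ((N+1−2k)/(N+1)) U_N(ν)U_{N+1}(ν) ). Then 0 < z_1(ν) and z_k(ν) < z_{k+1}(ν) for every k = 1,…,N/2 − 1; in particular 0 < z_1(ν) < z_2(ν) < ⋯ < z_{N/2}(ν). -/

import Mathlib

/-- Evaluation of the Chebyshev polynomial of the second kind. -/
noncomputable def Ucheb (n : ℤ) (x : ℝ) : ℝ := (Polynomial.Chebyshev.U ℝ n).eval x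

/-- Evaluation of the derivative of the Chebyshev polynomial of the second kind. -/
noncomputable def Ucheb' (n : ℤ) (x : ℝ) : ℝ :=
  (Polynomial.derivative (Polynomial.Chebyshev.U ℝ n)).eval x

/-- The k-th coordinate (1-based) of the vector Z(x). -/
noncomputable def zCoord (N k : ℕ) (x : ℝ) : ℝ :=
  (-1 : ℝ) ^ (k - 1) *
    (Ucheb ((k : ℤ) - 1) x * Ucheb (k : ℤ) x
      - Ucheb ((N : ℤ) - k) x * Ucheb ((N : ℤ) - k + 1) x
      + (((N : ℝ) + 1 - 2 * k) / ((N : ℝ) + 1)) * Ucheb (N : ℤ) x * Ucheb ((N : ℤ) + 1) x)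

/-!
Write `ν = sin α`, i.e. `ν = cos θ` with `θ = π/2 - α`. Since
`U_n(cos θ) sin θ = sin((n+1)θ)`, each product `U_{m-1} U_m` in `z_k` becomes a product of two
sines, and for even `N` this collapses to
  `z_k(sin α) cos²α = sin((N+2)α) (cos((N+1-2k)α) + (-1)^(k-1) (N+1-2k)/(N+1) cos((N+1)α))`.
Rolle's theorem between the zeros `0` and `sin(π/(N+2))` of `U_{N+1}` gives `(N+2)α < π`, and the
identity `(n+1) T_{n+1} = X U_n - (1 - X²) U_n'` turns `U'_{N+1}(ν) = 0` into
`(N+2) cos((N+1)α) = (N+1) sin α sin((N+2)α)`. Then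
  `(z_{k+1} - z_k) cos²α = 2 sin α sin((N+2)α) (sin((N-2k)α) ± (N-2k)/(N+2) sin((N+2)α))`,
which is positive by strict concavity of `sin` on `[0, π]`. Likewise `z_1 > 0`, because
`cos((N-1)α) > cos((N+1)α) > 0`.
-/

open Real Polynomial.Chebyshev

lemma Ucheb_cos_mul_sin (n : ℤ) (m : ℝ) (h : n + 1 = m) (θ : ℝ) :
    Ucheb n (cos θ) * sin θ = sin (m * θ) := by
  rw [Ucheb, U_real_cos, h]

lemma Ucheb_cos_eq_zero {n : ℤ} {m : ℝ} (h : n + 1 = m) {θ : ℝ} (hθ : sin θ ≠ 0)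
    (hm : sin (m * θ) = 0) : Ucheb n (cos θ) = 0 := by
  have := Ucheb_cos_mul_sin n m h θ
  rw [hm] at this
  exact (mul_eq_zero.1 this).resolve_right hθ

lemma sin_mul_cos_eq_of_Ucheb'_cos_eq_zero {n : ℤ} {θ : ℝ} (h : Ucheb' n (cos θ) = 0) :
    sin ((n + 1) * θ) * cos θ = (n + 1) * cos ((n + 1) * θ) * sin θ := by
  have key := congr_arg (Polynomial.eval (cos θ)) (add_one_mul_T_eq_poly_in_U (R := ℝ) n)
  simp only [Polynomial.eval_mul, Polynomial.eval_add, Polynomial.eval_sub, Polynomial.eval_pow,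
    Polynomial.eval_X, Polynomial.eval_one, Polynomial.eval_intCast, T_real_cos] at key
  rw [← Ucheb', h] at key
  push_cast at key
  rw [← U_real_cos]
  linear_combination -sin θ * key

lemma sin_mul_sin_succ_pi_div_two_sub (m : ℕ) (α : ℝ) :
    sin (m * (π / 2 - α)) * sin ((m + 1) * (π / 2 - α))
      = (sin α - (-1) ^ m * sin ((2 * m + 1) * α)) / 2 := by
  have h := two_mul_sin_mul_sin (m * (π / 2 - α)) ((m + 1) * (π / 2 - α))
  rw [show m * (π / 2 - α) - (m + 1) * (π / 2 - α) = -(π / 2 - α) by ring,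
    show m * (π / 2 - α) + (m + 1) * (π / 2 - α)
        = (m + 1 : ℕ) * π - ((2 * m + 1) * α + π / 2) by push_cast; ring,
    cos_neg, cos_pi_div_two_sub, cos_nat_mul_pi_sub, cos_add_pi_div_two, pow_succ] at h
  linear_combination h / 2

lemma mul_sin_lt_sin_mul {t x : ℝ} (ht0 : 0 < t) (ht1 : t < 1) (hx0 : 0 < x) (hxπ : x ≤ π) :
    t * sin x < sin (t * x) := by
  have := strictConcaveOn_sin_Icc.2 (x := 0) (y := x) ⟨le_rfl, pi_pos.le⟩ ⟨hx0.le, hxπ⟩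
    hx0.ne (sub_pos.2 ht1) ht0 (by ring)
  simpa using this

lemma zCoord_mul_sq (N k : ℕ) (x s : ℝ) :
    zCoord N k x * s ^ 2 = (-1) ^ (k - 1) *
      ((Ucheb ((k : ℤ) - 1) x * s) * (Ucheb (k : ℤ) x * s)
        - (Ucheb ((N : ℤ) - k) x * s) * (Ucheb ((N : ℤ) - k + 1) x * s)
        + ((N + 1 - 2 * k) / (N + 1))
          * ((Ucheb (N : ℤ) x * s) * (Ucheb ((N : ℤ) + 1) x * s))) := by
  unfold zCoord; ring

lemma cos_succ_mul_eq_of_Ucheb'_sin_eq_zero {N : ℕ} (hN : Even N) {α : ℝ}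
    (h : Ucheb' (N + 1) (sin α) = 0) :
    cos ((N + 1) * α) = (N + 1) / (N + 2) * sin α * sin ((N + 2) * α) := by
  rw [div_mul_eq_mul_div, div_mul_eq_mul_div, eq_div_iff (by positivity)]
  obtain ⟨n, rfl⟩ := hN
  rw [← cos_pi_div_two_sub] at h
  have key := sin_mul_cos_eq_of_Ucheb'_cos_eq_zero h
  rw [show (((n + n : ℕ) + 1 : ℤ) + 1 : ℝ) * (π / 2 - α)
      = (n + 1 : ℕ) * π - ((n + n : ℕ) + 2 : ℝ) * α by push_cast; ring,
    sin_nat_mul_pi_sub, cos_nat_mul_pi_sub, sin_pi_div_two_sub, cos_pi_div_two_sub] at key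
  have hε : ((-1 : ℝ) ^ (n + 1)) ^ 2 = 1 := by simp [← pow_mul]
  rw [show ((n + n : ℕ) + 1 : ℝ) * α = ((n + n : ℕ) + 2 : ℝ) * α - α by ring, cos_sub]
  push_cast at key ⊢
  linear_combination (-(-1 : ℝ) ^ (n + 1)) * key
    - (sin ((n + n + 2) * α) * sin α + (n + n + 2) * cos ((n + n + 2) * α) * cos α) * hε

lemma zCoord_sin_mul_cos_sq {N k : ℕ} (hN : Even N) (hk : 1 ≤ k) (hkN : k ≤ N) (α : ℝ) :
    zCoord N k (sin α) * cos α ^ 2 = sin ((N + 2) * α) *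
      (cos ((N + 1 - 2 * k) * α)
        + (-1) ^ (k - 1) * ((N + 1 - 2 * k) / (N + 1)) * cos ((N + 1) * α)) := by
  obtain ⟨j, rfl⟩ := Nat.exists_eq_add_of_le' hk
  obtain ⟨r, rfl⟩ := Nat.exists_eq_add_of_le hkN
  rw [← cos_pi_div_two_sub, ← sin_pi_div_two_sub α, zCoord_mul_sq,
    Ucheb_cos_mul_sin ((j + 1 : ℕ) - 1 : ℤ) ((j + 1 : ℕ) : ℝ) (by push_cast; ring),
    Ucheb_cos_mul_sin ((j + 1 : ℕ) : ℤ) ((j + 1 : ℕ) + 1 : ℝ) (by push_cast; ring),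
    Ucheb_cos_mul_sin ((j + 1 + r : ℕ) - (j + 1 : ℕ) : ℤ) ((r + 1 : ℕ) : ℝ)
      (by push_cast; ring),
    Ucheb_cos_mul_sin ((j + 1 + r : ℕ) - (j + 1 : ℕ) + 1 : ℤ) ((r + 1 : ℕ) + 1 : ℝ)
      (by push_cast; ring),
    Ucheb_cos_mul_sin ((j + 1 + r : ℕ) : ℤ) ((j + 1 + r + 1 : ℕ) : ℝ) (by push_cast; ring),
    Ucheb_cos_mul_sin ((j + 1 + r : ℕ) + 1 : ℤ) ((j + 1 + r + 1 : ℕ) + 1 : ℝ)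
      (by push_cast; ring),
    sin_mul_sin_succ_pi_div_two_sub, sin_mul_sin_succ_pi_div_two_sub,
    sin_mul_sin_succ_pi_div_two_sub, Nat.add_sub_cancel]
  -- now `k = j + 1`, `N = k + r`, and `(-1) ^ (r + 1)` is the sign of the `U_{N-k} U_{N-k+1}` term
  have hr : (-1 : ℝ) ^ (r + 1) = (-1) ^ j := by
    rw [neg_one_pow_eq_pow_mod_two, show (r + 1) % 2 = j % 2 by rw [Nat.even_iff] at hN; omega,
      ← neg_one_pow_eq_pow_mod_two]
  have hN1 : (-1 : ℝ) ^ (j + 1 + r + 1) = -1 := hN.add_one.neg_one_pow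
  have hε : ((-1 : ℝ) ^ j) ^ 2 = 1 := by simp [← pow_mul]
  rw [hr, hN1, pow_succ]
  have h1 := two_mul_sin_mul_cos ((j + 1 + r + 2 : ℝ) * α) ((r - j : ℝ) * α)
  have h2 := two_mul_sin_mul_cos ((j + 1 + r + 2 : ℝ) * α) ((j + 1 + r + 1 : ℝ) * α)
  push_cast at h1 h2 ⊢
  linear_combination (norm := ring_nf)
    (sin ((2 * j + 3) * α) + sin ((2 * r + 3) * α)) / 2 * hε - h1 / 2
      - (-1) ^ j * ((r - j) / (j + r + 2)) / 2 * h2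

lemma lt_sin_pi_div_of_Ucheb'_ne_zero {N : ℕ} (hN : Even N) (hN0 : 0 < N) {ν : ℝ}
    (h : ∀ x : ℝ, 0 < x → x < ν → Ucheb' (N + 1) x ≠ 0) : ν < sin (π / (N + 2)) := by
  obtain ⟨n, rfl⟩ := hN
  have hn : (1 : ℝ) ≤ n := by norm_cast; omega
  have hpi0 : 0 < π / ((n + n : ℕ) + 2) := by positivity
  have hpi : π / ((n + n : ℕ) + 2) < π / 2 := by
    rw [div_lt_div_iff_of_pos_left pi_pos (by positivity) two_pos]; push_cast; linarith
  have hb : 0 < sin (π / ((n + n : ℕ) + 2)) :=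
    sin_pos_of_pos_of_lt_pi hpi0 (by linarith [pi_pos])
  have h0 : Ucheb ((n + n : ℕ) + 1) (cos (π / 2)) = 0 := by
    refine Ucheb_cos_eq_zero (m := (n + n : ℕ) + 2) (by push_cast; ring) (by simp) ?_
    rw [show ((n + n : ℕ) + 2 : ℝ) * (π / 2) = (n + 1 : ℕ) * π by push_cast; ring,
      sin_nat_mul_pi]
  have h1 : Ucheb ((n + n : ℕ) + 1) (cos (π / 2 - π / ((n + n : ℕ) + 2))) = 0 := by
    refine Ucheb_cos_eq_zero (m := (n + n : ℕ) + 2) (by push_cast; ring) ?_ ?_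
    · rw [sin_pi_div_two_sub]
      exact (cos_pos_of_mem_Ioo ⟨by linarith [pi_pos], hpi⟩).ne'
    · rw [show ((n + n : ℕ) + 2 : ℝ) * (π / 2 - π / ((n + n : ℕ) + 2)) = n * π by
        field_simp; push_cast; ring, sin_nat_mul_pi]
  rw [cos_pi_div_two] at h0
  rw [cos_pi_div_two_sub] at h1
  by_contra! hν
  obtain ⟨c, hc, hc'⟩ := exists_deriv_eq_zero hb (Polynomial.continuous _).continuousOn
    (h0.trans h1.symm)
  rw [Polynomial.deriv] at hc'
  exact h c hc.1 (hc.2.trans_le hν) hc'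

section CriticalAngle

variable {N : ℕ} {α : ℝ}

lemma zCoord_succ_sub_mul_cos_sq (hN : Even N) {k : ℕ} (hk : 1 ≤ k) (hkN : k + 1 ≤ N)
    (hroot : cos ((N + 1) * α) = (N + 1) / (N + 2) * sin α * sin ((N + 2) * α)) :
    (zCoord N (k + 1) (sin α) - zCoord N k (sin α)) * cos α ^ 2
      = 2 * sin α * sin ((N + 2) * α) *
        (sin ((N - 2 * k) * α) + (-1) ^ k * ((N - 2 * k) / (N + 2)) * sin ((N + 2) * α)) := by
  have hε : (-1 : ℝ) ^ k = (-1) ^ (k - 1) * (-1) := by rw [← pow_succ, Nat.sub_add_cancel hk]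
  have hcos := cos_sub_cos ((N + 1 - 2 * (k + 1)) * α) ((N + 1 - 2 * k) * α)
  rw [sub_mul, zCoord_sin_mul_cos_sq hN (by omega) hkN, zCoord_sin_mul_cos_sq hN hk (by omega),
    Nat.add_sub_cancel, hroot, hε]
  rw [show ((N + 1 - 2 * (k + 1)) * α + (N + 1 - 2 * k) * α) / 2 = (N - 2 * k) * α by ring,
    show ((N + 1 - 2 * (k + 1)) * α - (N + 1 - 2 * k) * α) / 2 = -α by ring, sin_neg] at hcos
  push_cast
  field_simp
  linear_combination (norm := ring_nf) (N + 2) * sin ((N + 2) * α) * hcos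

lemma zCoord_lt_zCoord_succ (hN : Even N) {k : ℕ} (hk : 1 ≤ k) (hkN : 2 * k + 2 ≤ N)
    (hα : 0 < α) (hβ : (N + 2) * α < π)
    (hroot : cos ((N + 1) * α) = (N + 1) / (N + 2) * sin α * sin ((N + 2) * α)) :
    zCoord N k (sin α) < zCoord N (k + 1) (sin α) := by
  have hkN' : 2 * (k : ℝ) + 2 ≤ N := by exact_mod_cast hkN
  have hs : 0 < sin α := sin_pos_of_pos_of_lt_pi hα (by nlinarith)
  have hS : 0 < sin ((N + 2) * α) := sin_pos_of_pos_of_lt_pi (by positivity) hβ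
  have ht : 0 < ((N : ℝ) - 2 * k) / (N + 2) := div_pos (by linarith) (by positivity)
  have hconcave : (N - 2 * k) / (N + 2) * sin ((N + 2) * α) < sin ((N - 2 * k) * α) := by
    have := mul_sin_lt_sin_mul ht ((div_lt_one (by positivity)).2 (by linarith))
      (by positivity) hβ.le
    rwa [show (N - 2 * k) / (N + 2) * ((N + 2) * α) = (N - 2 * k) * α by field_simp] at this
  have hbracket :
      0 < sin ((N - 2 * k) * α) + (-1) ^ k * ((N - 2 * k) / (N + 2)) * sin ((N + 2) * α) := by
    rcases neg_one_pow_eq_or ℝ k with h | h <;> rw [h] <;> nlinarith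
  have hdiff : 0 < (zCoord N (k + 1) (sin α) - zCoord N k (sin α)) * cos α ^ 2 := by
    rw [zCoord_succ_sub_mul_cos_sq hN hk (by omega) hroot]
    exact mul_pos (by positivity) hbracket
  exact sub_pos.1 (pos_of_mul_pos_left hdiff (sq_nonneg _))

lemma zCoord_one_pos (hN : Even N) (hN0 : 0 < N) (hα : 0 < α) (hβ : (N + 2) * α < π)
    (hroot : cos ((N + 1) * α) = (N + 1) / (N + 2) * sin α * sin ((N + 2) * α)) :
    0 < zCoord N 1 (sin α) := by
  have hN1 : (1 : ℝ) ≤ N := by exact_mod_cast hN0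
  have hs : 0 < sin α := sin_pos_of_pos_of_lt_pi hα (by nlinarith)
  have hS : 0 < sin ((N + 2) * α) := sin_pos_of_pos_of_lt_pi (by positivity) hβ
  have hC : 0 < cos ((N + 1) * α) := by rw [hroot]; positivity
  have hcos : cos ((N + 1) * α) < cos ((N + 1 - 2 * 1) * α) :=
    cos_lt_cos_of_nonneg_of_le_pi (by nlinarith) (by nlinarith) (by nlinarith)
  have h1 : 0 < zCoord N 1 (sin α) * cos α ^ 2 := by
    rw [zCoord_sin_mul_cos_sq hN le_rfl hN0, Nat.sub_self, pow_zero, one_mul, Nat.cast_one]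
    have hc : 0 ≤ ((N : ℝ) + 1 - 2 * 1) / (N + 1) := div_nonneg (by linarith) (by positivity)
    exact mul_pos hS (add_pos_of_pos_of_nonneg (hC.trans hcos) (mul_nonneg hc hC.le))
  exact pos_of_mul_pos_left h1 (sq_nonneg _)

end CriticalAngle

lemma exists_sin_eq_of_lt_sin_pi_div {m ν : ℝ} (hm : 2 ≤ m) (hν0 : 0 < ν)
    (hν : ν < sin (π / m)) :
    ∃ α, 0 < α ∧ m * α < π ∧ sin α = ν := by
  have hm0 : 0 < m := by linarith
  refine ⟨arcsin ν, arcsin_pos.2 hν0, ?_,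
    sin_arcsin (by linarith) (hν.le.trans (sin_le_one _))⟩
  rw [← lt_div_iff₀' hm0,
    arcsin_lt_iff_lt_sin' ⟨by linarith [div_pos pi_pos hm0, pi_pos], ?_⟩]
  · exact hν
  · exact div_le_div_of_nonneg_left pi_pos.le two_pos hm

theorem stmt11 (N : ℕ) (hN : 4 ≤ N) (hNeven : Even N)
    (ν : ℝ) (hν0 : 0 < ν) (hνroot : Ucheb' (N + 1) ν = 0)
    (hνleast : ∀ x : ℝ, 0 < x → x < ν → Ucheb' (N + 1) x ≠ 0) :
    0 < zCoord N 1 ν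
      ∧ ∀ k : ℕ, 1 ≤ k → k ≤ N / 2 - 1 → zCoord N k ν < zCoord N (k + 1) ν := by
  obtain ⟨α, hα, hβ, rfl⟩ := exists_sin_eq_of_lt_sin_pi_div (by norm_cast; omega) hν0
    (lt_sin_pi_div_of_Ucheb'_ne_zero hNeven (by omega) hνleast)
  have hroot := cos_succ_mul_eq_of_Ucheb'_sin_eq_zero hNeven hνroot
  exact ⟨zCoord_one_pos hNeven (by omega) hα hβ hroot,
    fun k hk hkN => zCoord_lt_zCoord_succ hNeven hk (by omega) hα hβ hroot⟩
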